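/- arXiv:2209.14935 — 7 statements merged into one kernel-verified Lean document; each statement's English description precedes it below -/
import Mathlib

section
/- Let S be a nonempty finite type, let Q : Matrix S S ℝ be row-stochastic (all entries nonnegative and every row sums to 1), and let γ be a real number with 0 ≤ γ < 1. Then the matrix 1 - γ • Q is invertible, the series ∑_{t≥0} γ^t • Q^t converges entrywise absolutely, and its sum equals (1 - γ • Q)⁻¹. -/
/-! In the ℓ∞ operator norm (maximal absolute row sum) a row-stochastic matrix has norm at most
`1`, so `‖γ • Q‖ < 1` and the Neumann series of `γ • Q` converges to `(1 - γ • Q)⁻¹` in the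
complete normed ring of matrices. Entrywise, powers of `Q` are again row-stochastic, so
`0 ≤ (Q ^ t) i j ≤ 1` and the series is dominated by the geometric series `∑ γ ^ t`. -/

open Matrix

namespace Matrix

variable {n : Type*} [Fintype n] [DecidableEq n]

section LinftyOpNorm

attribute [local instance] Matrix.linftyOpNormedRing Matrix.linftyOpNormedAlgebra

lemma linfty_opNorm_le_one_of_mem_rowStochastic {M : Matrix n n ℝ}
    (hM : M ∈ rowStochastic ℝ n) : ‖M‖ ≤ 1 := by
  have hrow (i : n) : ∑ j, ‖M i j‖₊ = 1 := by
    ext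
    push_cast
    simp_rw [Real.norm_of_nonneg (nonneg_of_mem_rowStochastic hM)]
    exact sum_row_of_mem_rowStochastic hM i
  rw [← coe_nnnorm, linfty_opNNNorm_def, NNReal.coe_le_one]
  exact Finset.sup_le fun i _ => (hrow i).le

lemma linfty_opNorm_smul_lt_one_of_mem_rowStochastic {Q : Matrix n n ℝ}
    (hQ : Q ∈ rowStochastic ℝ n) {γ : ℝ} (hγ0 : 0 ≤ γ) (hγ1 : γ < 1) : ‖γ • Q‖ < 1 :=
  calc ‖γ • Q‖ ≤ ‖γ‖ * ‖Q‖ := norm_smul_le γ Q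
    _ ≤ γ * 1 := by
      rw [Real.norm_of_nonneg hγ0]
      exact mul_le_mul_of_nonneg_left (linfty_opNorm_le_one_of_mem_rowStochastic hQ) hγ0
    _ < 1 := by linarith

lemma isUnit_one_sub_smul_of_mem_rowStochastic {Q : Matrix n n ℝ}
    (hQ : Q ∈ rowStochastic ℝ n) {γ : ℝ} (hγ0 : 0 ≤ γ) (hγ1 : γ < 1) :
    IsUnit (1 - γ • Q) :=
  isUnit_one_sub_of_norm_lt_one (linfty_opNorm_smul_lt_one_of_mem_rowStochastic hQ hγ0 hγ1)

lemma hasSum_smul_pow_of_mem_rowStochastic {Q : Matrix n n ℝ}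
    (hQ : Q ∈ rowStochastic ℝ n) {γ : ℝ} (hγ0 : 0 ≤ γ) (hγ1 : γ < 1) :
    HasSum (fun t : ℕ => γ ^ t • Q ^ t) (1 - γ • Q)⁻¹ := by
  simp_rw [← smul_pow, nonsing_inv_eq_ringInverse]
  exact hasSum_geom_series_inverse _ (linfty_opNorm_smul_lt_one_of_mem_rowStochastic hQ hγ0 hγ1)

end LinftyOpNorm

lemma summable_abs_smul_pow_apply_of_mem_rowStochastic {Q : Matrix n n ℝ}
    (hQ : Q ∈ rowStochastic ℝ n) {γ : ℝ} (hγ0 : 0 ≤ γ) (hγ1 : γ < 1) (i j : n) :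
    Summable fun t : ℕ => |(γ ^ t • Q ^ t) i j| := by
  refine .of_nonneg_of_le (fun _ => abs_nonneg _) (fun t => ?_)
    (summable_geometric_of_lt_one hγ0 hγ1)
  have hQt := pow_mem hQ t
  rw [smul_apply, smul_eq_mul, abs_mul, abs_of_nonneg (pow_nonneg hγ0 t),
    abs_of_nonneg (nonneg_of_mem_rowStochastic hQt)]
  exact mul_le_of_le_one_right (pow_nonneg hγ0 t) (le_one_of_mem_rowStochastic hQt)

end Matrix

theorem stmt0_general {S : Type*} [Fintype S] [DecidableEq S]
    (Q : Matrix S S ℝ) (γ : ℝ)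
    (hQ0 : ∀ i j, 0 ≤ Q i j) (hQ1 : ∀ i, ∑ j, Q i j = 1)
    (hγ0 : 0 ≤ γ) (hγ1 : γ < 1) :
    IsUnit (1 - γ • Q) ∧
    (∀ i j, Summable fun t : ℕ => |(γ ^ t • Q ^ t) i j|) ∧
    HasSum (fun t : ℕ => γ ^ t • Q ^ t) (1 - γ • Q)⁻¹ := by
  have hQ : Q ∈ rowStochastic ℝ S := mem_rowStochastic_iff_sum.2 ⟨hQ0, hQ1⟩
  exact ⟨isUnit_one_sub_smul_of_mem_rowStochastic hQ hγ0 hγ1,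
    summable_abs_smul_pow_apply_of_mem_rowStochastic hQ hγ0 hγ1,
    hasSum_smul_pow_of_mem_rowStochastic hQ hγ0 hγ1⟩

/-- For a row-stochastic matrix `Q` on a nonempty finite type `S` and a
discount factor `0 ≤ γ < 1`, the matrix `1 - γ • Q` is invertible, the Neumann series
`∑_{t ≥ 0} γ^t • Q^t` converges entrywise absolutely, and its sum equals `(1 - γ • Q)⁻¹`. -/
theorem stmt0 {S : Type*} [Fintype S] [Nonempty S] [DecidableEq S]
    (Q : Matrix S S ℝ) (γ : ℝ)
    (hQ0 : ∀ i j, 0 ≤ Q i j) (hQ1 : ∀ i, ∑ j, Q i j = 1)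
    (hγ0 : 0 ≤ γ) (hγ1 : γ < 1) :
    IsUnit (1 - γ • Q) ∧
    (∀ i j, Summable fun t : ℕ => |(γ ^ t • Q ^ t) i j|) ∧
    HasSum (fun t : ℕ => γ ^ t • Q ^ t) (1 - γ • Q)⁻¹ :=
  stmt0_general Q γ hQ0 hQ1 hγ0 hγ1
end

section
/- Let d ∈ ℕ, let Φ : Matrix S (Fin d) ℝ be a matrix of basic features (row φ(s) ∈ ℝ^d for each state s), and for each z ∈ ℝ^d let π_z be a deterministic policy. Define the universal successor features ψ_z := ∑_{t≥0} γ^t • (P * E_{π_z})^t * P * Φ ∈ Matrix (S × A) (Fin d) ℝ, and assume that for every z ∈ ℝ^d the policy π_z is greedy with respect to (s,a) ↦ ψ_z (s,a) ⬝ z (dot product of the row ψ_z (s,a) with z). If the reward satisfies r = Φ.mulVec w for some w ∈ ℝ^d (i.e., r(s) = φ(s) ⬝ w for all s), then the policy π_w is optimal for r, and Q^{π_w}_r (s,a) = ψ_w (s,a) ⬝ w for all (s,a) ∈ S × A. -/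
open Matrix

/-- The selection matrix `E_π` of a deterministic policy `π : S → A`:
`E_π (s, (s',a)) = 1` if `s' = s` and `a = π s`, and `0` otherwise. -/
noncomputable def selMat {S A : Type*} [DecidableEq S] [DecidableEq A] (π : S → A) :
    Matrix S (S × A) ℝ :=
  fun s p => if p.1 = s ∧ p.2 = π s then 1 else 0

/-- The Q-function of policy `π` for reward `r`:
`Q^π_r = ∑_{t ≥ 0} γ^t • ((P * E_π)^t).mulVec (P.mulVec r)`. -/
noncomputable def Qfun {S A : Type*} [Fintype S] [Fintype A] [DecidableEq S] [DecidableEq A]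
    (P : Matrix (S × A) S ℝ) (γ : ℝ) (π : S → A) (r : S → ℝ) : S × A → ℝ :=
  ∑' t : ℕ, γ ^ t • ((P * selMat π) ^ t).mulVec (P.mulVec r)

/-- The (universal) successor features of the basic features `Φ` under policy `π`:
`ψ = ∑_{t ≥ 0} γ^t • ((P * E_π)^t * P * Φ)`. -/
noncomputable def USF {S A : Type*} [Fintype S] [Fintype A] [DecidableEq S] [DecidableEq A]
    {d : ℕ} (P : Matrix (S × A) S ℝ) (γ : ℝ) (Φ : Matrix S (Fin d) ℝ) (π : S → A) :
    Matrix (S × A) (Fin d) ℝ :=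
  ∑' t : ℕ, γ ^ t • ((P * selMat π) ^ t * P * Φ)

/-!
Write `M_π = P E_π`; it is row-stochastic, so for `0 ≤ γ < 1` the successor representation
`R_π = ∑ₜ (γ M_π)ᵗ` converges and satisfies `R_π = 1 + γ M_π R_π`. Hence `Q^π_r = R_π P r` obeys the
Bellman equation `Q^π_r = P r + γ M_π Q^π_r`, and for `r = Φ w` it equals `R_π P Φ w = ψ_π w`, so
`π_w` is greedy for its own Q-function. If `π` is greedy for `Q^π_r`, then for any `π'` the
difference `D = Q^{π'}_r - Q^π_r` satisfies `D ≤ γ M_{π'} D`; at a maximiser of `D` this reads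
`max D ≤ γ max D`, so `D ≤ 0`.
-/

section RowStochastic

variable {X : Type*} [Fintype X] [DecidableEq X] {M : Matrix X X ℝ} {γ : ℝ}

lemma mulVec_mono_of_nonneg {m n : Type*} [Fintype n] {N : Matrix m n ℝ}
    (hN : ∀ i j, 0 ≤ N i j) {u v : n → ℝ} (huv : u ≤ v) : N *ᵥ u ≤ N *ᵥ v :=
  fun i => dotProduct_le_dotProduct_of_nonneg_left huv (hN i)

lemma mulVec_apply_le_of_mem_rowStochastic (hM : M ∈ rowStochastic ℝ X) {v : X → ℝ} {c : ℝ}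
    (hv : ∀ y, v y ≤ c) (x : X) : (M *ᵥ v) x ≤ c := by
  have hle : M *ᵥ v ≤ M *ᵥ (c • 1) :=
    mulVec_mono_of_nonneg (fun _ _ => nonneg_of_mem_rowStochastic hM) fun y => by simpa using hv y
  simpa [mulVec_smul, one_vecMul_of_mem_rowStochastic hM] using hle x

lemma summable_smul_pow_of_mem_rowStochastic (hM : M ∈ rowStochastic ℝ X) (hγ0 : 0 ≤ γ)
    (hγ1 : γ < 1) : Summable fun t : ℕ => (γ • M) ^ t := by
  refine Pi.summable.2 fun i => Pi.summable.2 fun j => ?_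
  refine Summable.of_nonneg_of_le (fun t => ?_) (fun t => ?_)
    (summable_geometric_of_lt_one hγ0 hγ1)
  all_goals
    have hMt := pow_mem hM t
    simp only [smul_pow, Matrix.smul_apply, smul_eq_mul]
  · exact mul_nonneg (pow_nonneg hγ0 t) (nonneg_of_mem_rowStochastic hMt)
  · exact mul_le_of_le_one_right (pow_nonneg hγ0 t) (le_one_of_mem_rowStochastic hMt)

lemma nonpos_of_le_smul_mulVec (hM : M ∈ rowStochastic ℝ X) (hγ0 : 0 ≤ γ) (hγ1 : γ < 1)
    {D : X → ℝ} (hD : D ≤ γ • (M *ᵥ D)) : D ≤ 0 := by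
  intro x
  show D x ≤ 0
  have : Nonempty X := ⟨x⟩
  obtain ⟨x₀, hx₀⟩ := Finite.exists_max D
  have hMD : (M *ᵥ D) x₀ ≤ D x₀ := mulVec_apply_le_of_mem_rowStochastic hM hx₀ x₀
  have hDx₀ : D x₀ ≤ γ * D x₀ := (hD x₀).trans (mul_le_mul_of_nonneg_left hMD hγ0)
  exact (hx₀ x).trans (by nlinarith)

end RowStochastic

section MDP

variable {S A : Type*} [Fintype S] [Fintype A] [DecidableEq S] [DecidableEq A]
  {P : Matrix (S × A) S ℝ} {γ : ℝ}

lemma selMat_mulVec (π : S → A) (v : S × A → ℝ) : selMat π *ᵥ v = fun s => v (s, π s) := by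
  funext s
  simp [selMat, mulVec, dotProduct, Fintype.sum_prod_type, ite_and]

lemma mul_selMat_mem_rowStochastic (hP0 : ∀ sa s', 0 ≤ P sa s')
    (hP1 : ∀ sa, ∑ s', P sa s' = 1) (π : S → A) : P * selMat π ∈ rowStochastic ℝ (S × A) := by
  refine mem_rowStochastic.2 ⟨fun x y => ?_, ?_⟩
  · exact Finset.sum_nonneg fun s _ => mul_nonneg (hP0 x s) (by unfold selMat; positivity)
  · rw [← mulVec_mulVec, selMat_mulVec]
    funext x
    simpa [mulVec, dotProduct] using hP1 x

variable (P γ) in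
noncomputable def successorRep (π : S → A) : Matrix (S × A) (S × A) ℝ :=
  ∑' t : ℕ, (γ • (P * selMat π)) ^ t

variable {π : S → A}

lemma Qfun_eq_successorRep_mulVec (h : Summable fun t : ℕ => (γ • (P * selMat π)) ^ t)
    (r : S → ℝ) : Qfun P γ π r = successorRep P γ π *ᵥ (P *ᵥ r) := by
  simp_rw [Qfun, ← smul_mulVec, ← smul_pow]
  exact (h.map_tsum (mulVec.addMonoidHomLeft (P *ᵥ r))
    (continuous_id.matrix_mulVec continuous_const)).symm

lemma USF_eq_successorRep_mul (h : Summable fun t : ℕ => (γ • (P * selMat π)) ^ t) {d : ℕ}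
    (Φ : Matrix S (Fin d) ℝ) : USF P γ Φ π = successorRep P γ π * P * Φ := by
  simp_rw [USF, ← Matrix.smul_mul, ← smul_pow, Matrix.mul_assoc]
  exact (h.map_tsum (addMonoidHomMulRight (P * Φ))
    (continuous_id.matrix_mul continuous_const)).symm

lemma Qfun_mulVec_eq_USF_mulVec (h : Summable fun t : ℕ => (γ • (P * selMat π)) ^ t) {d : ℕ}
    (Φ : Matrix S (Fin d) ℝ) (w : Fin d → ℝ) : Qfun P γ π (Φ *ᵥ w) = USF P γ Φ π *ᵥ w := by
  rw [Qfun_eq_successorRep_mulVec h, USF_eq_successorRep_mul h, mulVec_mulVec, mulVec_mulVec]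

lemma Qfun_eq_add_smul_mulVec (h : Summable fun t : ℕ => (γ • (P * selMat π)) ^ t)
    (r : S → ℝ) : Qfun P γ π r = P *ᵥ r + γ • ((P * selMat π) *ᵥ Qfun P γ π r) := by
  have hR : successorRep P γ π = 1 + γ • (P * selMat π) * successorRep P γ π := by
    have := h.one_sub_mul_tsum_pow
    rwa [sub_mul, one_mul, sub_eq_iff_eq_add] at this
  rw [Qfun_eq_successorRep_mulVec h]
  conv_lhs => rw [hR]
  rw [add_mulVec, one_mulVec, ← mulVec_mulVec, smul_mulVec]

theorem Qfun_le_Qfun_of_greedy (hP0 : ∀ sa s', 0 ≤ P sa s') (hP1 : ∀ sa, ∑ s', P sa s' = 1)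
    (hγ0 : 0 ≤ γ) (hγ1 : γ < 1) {r : S → ℝ}
    (hπ : ∀ s a, Qfun P γ π r (s, a) ≤ Qfun P γ π r (s, π s)) (π' : S → A) :
    Qfun P γ π' r ≤ Qfun P γ π r := by
  have hM (σ : S → A) := mul_selMat_mem_rowStochastic hP0 hP1 σ
  have hQ (σ : S → A) := Qfun_eq_add_smul_mulVec
    (summable_smul_pow_of_mem_rowStochastic (hM σ) hγ0 hγ1) r
  set Q := Qfun P γ π r
  set Q' := Qfun P γ π' r
  have hswitch : (P * selMat π') *ᵥ Q ≤ (P * selMat π) *ᵥ Q := by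
    rw [← mulVec_mulVec, ← mulVec_mulVec, selMat_mulVec, selMat_mulVec]
    exact mulVec_mono_of_nonneg hP0 fun s => hπ s (π' s)
  have hD : Q' - Q ≤ γ • ((P * selMat π') *ᵥ (Q' - Q)) := fun x => by
    have hswitch_x := mul_le_mul_of_nonneg_left (hswitch x) hγ0
    have hQ'_x := congrFun (hQ π') x
    have hQ_x := congrFun (hQ π) x
    simp only [Pi.add_apply, Pi.smul_apply, Pi.sub_apply, smul_eq_mul, mulVec_sub] at hQ_x hQ'_x ⊢
    linarith
  exact sub_nonpos.1 (nonpos_of_le_smul_mulVec (hM π') hγ0 hγ1 hD)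

end MDP

theorem stmt3_general {S A : Type*} [Fintype S] [Fintype A] [Nonempty A]
    [DecidableEq S] [DecidableEq A]
    (P : Matrix (S × A) S ℝ) (γ : ℝ)
    (hP0 : ∀ sa s', 0 ≤ P sa s') (hP1 : ∀ sa, ∑ s', P sa s' = 1)
    (hγ0 : 0 ≤ γ) (hγ1 : γ < 1)
    {d : ℕ} (Φ : Matrix S (Fin d) ℝ) (πz : (Fin d → ℝ) → S → A)
    (hgreedy : ∀ z : Fin d → ℝ, ∀ s : S,
      USF P γ Φ (πz z) (s, πz z s) ⬝ᵥ z =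
        Finset.univ.sup' Finset.univ_nonempty (fun a : A => USF P γ Φ (πz z) (s, a) ⬝ᵥ z))
    (r : S → ℝ) (w : Fin d → ℝ) (hr : r = Φ.mulVec w) :
    (∀ π' : S → A, ∀ sa : S × A, Qfun P γ π' r sa ≤ Qfun P γ (πz w) r sa) ∧
    (∀ sa : S × A, Qfun P γ (πz w) r sa = USF P γ Φ (πz w) sa ⬝ᵥ w) := by
  have hQ : Qfun P γ (πz w) r = USF P γ Φ (πz w) *ᵥ w := hr ▸ Qfun_mulVec_eq_USF_mulVec
    (summable_smul_pow_of_mem_rowStochastic (mul_selMat_mem_rowStochastic hP0 hP1 _) hγ0 hγ1) Φ w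
  have hπw (s : S) (a : A) : Qfun P γ (πz w) r (s, a) ≤ Qfun P γ (πz w) r (s, πz w s) := by
    rw [hQ, mulVec, mulVec, hgreedy w s]
    exact Finset.le_sup' (fun a => USF P γ Φ (πz w) (s, a) ⬝ᵥ w) (Finset.mem_univ a)
  exact ⟨fun π' => Qfun_le_Qfun_of_greedy hP0 hP1 hγ0 hγ1 hπw π', fun sa => congrFun hQ sa⟩

/-- **successor-features optimality.** If for every `z ∈ ℝ^d` the policy `π_z`
is greedy with respect to `(s,a) ↦ ψ_z (s,a) ⬝ z`, and the reward is linear in the basic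
features, `r = Φ.mulVec w`, then `π_w` is optimal for `r` and
`Q^{π_w}_r (s,a) = ψ_w (s,a) ⬝ w`. -/
theorem stmt3 {S A : Type*} [Fintype S] [Fintype A] [Nonempty S] [Nonempty A]
    [DecidableEq S] [DecidableEq A]
    (P : Matrix (S × A) S ℝ) (γ : ℝ)
    (hP0 : ∀ sa s', 0 ≤ P sa s') (hP1 : ∀ sa, ∑ s', P sa s' = 1)
    (hγ0 : 0 ≤ γ) (hγ1 : γ < 1)
    {d : ℕ} (Φ : Matrix S (Fin d) ℝ) (πz : (Fin d → ℝ) → S → A)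
    (hgreedy : ∀ z : Fin d → ℝ, ∀ s : S,
      USF P γ Φ (πz z) (s, πz z s) ⬝ᵥ z =
        Finset.univ.sup' Finset.univ_nonempty (fun a : A => USF P γ Φ (πz z) (s, a) ⬝ᵥ z))
    (r : S → ℝ) (w : Fin d → ℝ) (hr : r = Φ.mulVec w) :
    (∀ π' : S → A, ∀ sa : S × A, Qfun P γ π' r sa ≤ Qfun P γ (πz w) r sa) ∧
    (∀ sa : S × A, Qfun P γ (πz w) r sa = USF P γ Φ (πz w) sa ⬝ᵥ w) :=
  stmt3_general P γ hP0 hP1 hγ0 hγ1 Φ πz hgreedy r w hr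
end

section
/- Let S' be a nonempty finite type, ι an arbitrary type, ρ : S' → ℝ, d ∈ ℕ, F : ι → ℝ^d, B : S' → ℝ^d, and let M : ι → S' → ℝ satisfy M x s' = (F x ⬝ B s') * ρ(s') for all x ∈ ι and s' ∈ S'. If the matrix Σ := ∑_{s'} ρ(s') • (B(s') B(s')ᵀ) (a d × d real matrix) is invertible and φ(s) := Σ⁻¹.mulVec (B s), then ∑_{s'} M x s' • φ(s') = F x for every x ∈ ι. -/
open Matrix

/-! Expanding the Gram matrix `Σ = ∑ ρ(s') B(s') B(s')ᵀ` against `F x` gives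
`Σ (F x) = ∑ (F x ⬝ B s') ρ(s') B(s') = ∑ M x s' • B(s')`; applying `Σ⁻¹` to both sides
turns the right-hand side into `∑ M x s' • φ(s')`. -/

theorem Matrix.sum_smul_vecMulVec_self_mulVec {R ι n : Type*} [CommSemiring R] [Fintype n]
    (s : Finset ι) (ρ : ι → R) (b : ι → n → R) (v : n → R) :
    (∑ i ∈ s, ρ i • vecMulVec (b i) (b i)) *ᵥ v = ∑ i ∈ s, ((v ⬝ᵥ b i) * ρ i) • b i := by
  rw [sum_mulVec]
  refine Finset.sum_congr rfl fun i _ => ?_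
  rw [smul_mulVec, vecMulVec_mulVec, op_smul_eq_smul, smul_smul, dotProduct_comm, mul_comm]

theorem stmt6_general {S' : Type*} [Fintype S'] {ι : Type*}
    (ρ : S' → ℝ) {d : ℕ}
    (F : ι → Fin d → ℝ) (B : S' → Fin d → ℝ) (M : ι → S' → ℝ)
    (hM : ∀ (x : ι) (s' : S'), M x s' = (F x ⬝ᵥ B s') * ρ s')
    (Sig : Matrix (Fin d) (Fin d) ℝ)
    (hSig : Sig = ∑ s', ρ s' • vecMulVec (B s') (B s'))
    (hinv : IsUnit Sig)
    (φ : S' → Fin d → ℝ) (hφ : ∀ s, φ s = Sig⁻¹.mulVec (B s)) :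
    ∀ x : ι, ∑ s', M x s' • φ s' = F x := by
  intro x
  have : Invertible Sig := hinv.invertible
  have hGram : Sig *ᵥ F x = ∑ s', M x s' • B s' := by
    simp only [hSig, sum_smul_vecMulVec_self_mulVec, hM]
  simp only [hφ, ← mulVec_smul, ← mulVec_sum]
  exact inv_mulVec_eq_vec hGram.symm

/-- If `M x s' = (F x ⬝ B s') * ρ(s')` and the matrix
`Σ = ∑_{s'} ρ(s') • B(s') B(s')ᵀ` is invertible, then with `φ(s) := Σ⁻¹ B(s)` one has
`∑_{s'} M x s' • φ(s') = F x` for every `x`: the factorization makes `F` the successor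
features of the basic features `φ = (E_ρ[B Bᵀ])⁻¹ B`. -/
theorem stmt6 {S' : Type*} [Fintype S'] [Nonempty S'] {ι : Type*}
    (ρ : S' → ℝ) {d : ℕ}
    (F : ι → Fin d → ℝ) (B : S' → Fin d → ℝ) (M : ι → S' → ℝ)
    (hM : ∀ (x : ι) (s' : S'), M x s' = (F x ⬝ᵥ B s') * ρ s')
    (Sig : Matrix (Fin d) (Fin d) ℝ)
    (hSig : Sig = ∑ s', ρ s' • vecMulVec (B s') (B s'))
    (hinv : IsUnit Sig)
    (φ : S' → Fin d → ℝ) (hφ : ∀ s, φ s = Sig⁻¹.mulVec (B s)) :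
    ∀ x : ι, ∑ s', M x s' • φ s' = F x :=
  stmt6_general ρ F B M hM Sig hSig hinv φ hφ
end

section
/- Suppose ρ : S → ℝ, χ : S × A → ℝ^d, μ : S → ℝ^d, and the transitions are given by the finite-rank model P ((s,a), s') = (χ(s,a) ⬝ μ(s')) * ρ(s') for all (s,a) ∈ S × A and s' ∈ S. If two rewards r, r' : S → ℝ satisfy ∑_s ρ(s) • r(s) • μ(s) = ∑_s ρ(s) • r'(s) • μ(s) in ℝ^d, then Q^π_r = Q^π_{r'} for every deterministic policy π. -/
open Matrix

theorem mulVec_eq_dotProduct_sum_of_factorization {m n ι R : Type*} [Fintype n] [Fintype ι]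
    [CommSemiring R] (P : Matrix m n R) (ρ : n → R) (χ : m → ι → R) (μ : n → ι → R)
    (hP : ∀ i j, P i j = (χ i ⬝ᵥ μ j) * ρ j) (g : n → R) :
    P *ᵥ g = fun i => χ i ⬝ᵥ ∑ j, ρ j • g j • μ j := by
  funext i
  simp only [mulVec, dotProduct, hP, Finset.sum_apply, Pi.smul_apply, smul_eq_mul,
    Finset.sum_mul, Finset.mul_sum]
  rw [Finset.sum_comm]
  exact Finset.sum_congr rfl fun _ _ => Finset.sum_congr rfl fun _ _ => by ring

theorem Qfun_congr_of_mulVec_eq {S A : Type*} [Fintype S] [Fintype A] [DecidableEq S]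
    [DecidableEq A] (P : Matrix (S × A) S ℝ) (γ : ℝ) (π : S → A) {r r' : S → ℝ}
    (h : P *ᵥ r = P *ᵥ r') : Qfun P γ π r = Qfun P γ π r' := by
  rw [Qfun, Qfun, h]

theorem stmt8_general {S A : Type*} [Fintype S] [Fintype A]
    [DecidableEq S] [DecidableEq A]
    (P : Matrix (S × A) S ℝ) (γ : ℝ)
    (ρ : S → ℝ) {d : ℕ} (χ : S × A → Fin d → ℝ) (μ : S → Fin d → ℝ)
    (hP : ∀ (sa : S × A) (s' : S), P sa s' = (χ sa ⬝ᵥ μ s') * ρ s')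
    (r r' : S → ℝ)
    (hrr' : ∑ s, ρ s • r s • μ s = ∑ s, ρ s • r' s • μ s) :
    ∀ π : S → A, Qfun P γ π r = Qfun P γ π r' := by
  intro π
  apply Qfun_congr_of_mulVec_eq
  rw [mulVec_eq_dotProduct_sum_of_factorization P ρ χ μ hP,
    mulVec_eq_dotProduct_sum_of_factorization P ρ χ μ hP, hrr']

/-- Under the finite-rank transition model
`P ((s,a), s') = (χ(s,a) ⬝ μ(s')) * ρ(s')`, two rewards with the same reward features
`∑_s ρ(s) r(s) μ(s)` have the same Q-function for every deterministic policy. -/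
theorem stmt8 {S A : Type*} [Fintype S] [Fintype A] [Nonempty S] [Nonempty A]
    [DecidableEq S] [DecidableEq A]
    (P : Matrix (S × A) S ℝ) (γ : ℝ)
    (hP0 : ∀ sa s', 0 ≤ P sa s') (hP1 : ∀ sa, ∑ s', P sa s' = 1)
    (hγ0 : 0 ≤ γ) (hγ1 : γ < 1)
    (ρ : S → ℝ) {d : ℕ} (χ : S × A → Fin d → ℝ) (μ : S → Fin d → ℝ)
    (hP : ∀ (sa : S × A) (s' : S), P sa s' = (χ sa ⬝ᵥ μ s') * ρ s')
    (r r' : S → ℝ)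
    (hrr' : ∑ s, ρ s • r s • μ s = ∑ s, ρ s • r' s • μ s) :
    ∀ π : S → A, Qfun P γ π r = Qfun P γ π r' :=
  stmt8_general P γ ρ χ μ hP r r' hrr'
end

section
/- Let S be a nonempty finite type, let ρ₂ : S × S → ℝ be a nonnegative function with ∑_{s,s'} ρ₂(s,s') = 1 whose two marginals coincide, i.e., ∑_{s'} ρ₂(s, s') = ∑_{s'} ρ₂(s', s) =: ρ(s) for every s ∈ S, and let φ : S → ℝ^d. Then ∑_{s,s'} ρ₂(s,s') * ‖φ(s) − φ(s')‖² + ∑_{s,s'} ρ(s) * ρ(s') * ((φ(s) ⬝ φ(s'))² − ‖φ(s)‖² − ‖φ(s')‖²) = −2 * ∑_{s,s'} ρ₂(s,s') * (φ(s) ⬝ φ(s')) + ∑_{s,s'} ρ(s) * ρ(s') * (φ(s) ⬝ φ(s'))². -/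
open scoped RealInnerProductSpace

/-!
Expand `‖φ s - φ s'‖² = ‖φ s‖² + ‖φ s'‖² - 2⟪φ s, φ s'⟫`. Because both marginals of `ρ₂`
equal `ρ`, the norm terms integrate against `ρ₂` to `2 ∑ ρ s ‖φ s‖²`; since `∑ ρ = 1`, the
product `ρ ⊗ ρ` has the same marginals, so the norm terms of the regularizer integrate to the
same quantity and the two cancel.
-/

open Finset

section Marginals

variable {S R : Type*} [Fintype S] [CommSemiring R] {ρ₂ : S × S → R} {ρ : S → R}

theorem sum_sum_mul_add_eq_of_marginals (hfst : ∀ s, ∑ s', ρ₂ (s, s') = ρ s)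
    (hsnd : ∀ s, ∑ s', ρ₂ (s', s) = ρ s) (f : S → R) :
    ∑ s, ∑ s', ρ₂ (s, s') * (f s + f s') = 2 * ∑ s, ρ s * f s := by
  have hleft : ∑ s, ∑ s', ρ₂ (s, s') * f s = ∑ s, ρ s * f s := by
    simp_rw [← sum_mul, hfst]
  have hright : ∑ s, ∑ s', ρ₂ (s, s') * f s' = ∑ s, ρ s * f s := by
    rw [sum_comm]
    simp_rw [← sum_mul, hsnd]
  simp_rw [mul_add, sum_add_distrib, hleft, hright, two_mul]

theorem sum_eq_one_of_marginal (htotal : ∑ p, ρ₂ p = 1) (hfst : ∀ s, ∑ s', ρ₂ (s, s') = ρ s) :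
    ∑ s, ρ s = 1 := by
  simpa only [Fintype.sum_prod_type, hfst] using htotal

theorem sum_mul_mul_left_of_sum_eq_one (hρ : ∑ s, ρ s = 1) (s : S) :
    ∑ s', ρ s * ρ s' = ρ s := by
  rw [← mul_sum, hρ, mul_one]

theorem sum_mul_mul_right_of_sum_eq_one (hρ : ∑ s, ρ s = 1) (s : S) :
    ∑ s', ρ s' * ρ s = ρ s := by
  rw [← sum_mul, hρ, one_mul]

end Marginals

theorem stmt10_general {S : Type*} [Fintype S] {d : ℕ}
    (ρ₂ : S × S → ℝ) (hρ₂1 : ∑ p : S × S, ρ₂ p = 1)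
    (ρ : S → ℝ)
    (hmarg1 : ∀ s, ∑ s', ρ₂ (s, s') = ρ s)
    (hmarg2 : ∀ s, ∑ s', ρ₂ (s', s) = ρ s)
    (φ : S → EuclideanSpace ℝ (Fin d)) :
    (∑ s, ∑ s', ρ₂ (s, s') * ‖φ s - φ s'‖ ^ 2)
      + (∑ s, ∑ s', ρ s * ρ s' * (⟪φ s, φ s'⟫ ^ 2 - ‖φ s‖ ^ 2 - ‖φ s'‖ ^ 2))
    = -2 * (∑ s, ∑ s', ρ₂ (s, s') * ⟪φ s, φ s'⟫)
      + ∑ s, ∑ s', ρ s * ρ s' * ⟪φ s, φ s'⟫ ^ 2 := by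
  have hρ : ∑ s, ρ s = 1 := sum_eq_one_of_marginal hρ₂1 hmarg1
  have hcoupling := sum_sum_mul_add_eq_of_marginals hmarg1 hmarg2 (‖φ ·‖ ^ 2)
  have hproduct := sum_sum_mul_add_eq_of_marginals (ρ₂ := fun p => ρ p.1 * ρ p.2)
    (sum_mul_mul_left_of_sum_eq_one hρ) (sum_mul_mul_right_of_sum_eq_one hρ) (‖φ ·‖ ^ 2)
  have hexpand_dist : ∀ s s', ρ₂ (s, s') * ‖φ s - φ s'‖ ^ 2
      = ρ₂ (s, s') * (‖φ s‖ ^ 2 + ‖φ s'‖ ^ 2) - 2 * (ρ₂ (s, s') * ⟪φ s, φ s'⟫) := by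
    intro s s'
    rw [norm_sub_sq_real]
    ring
  have hexpand_reg : ∀ s s', ρ s * ρ s' * (⟪φ s, φ s'⟫ ^ 2 - ‖φ s‖ ^ 2 - ‖φ s'‖ ^ 2)
      = ρ s * ρ s' * ⟪φ s, φ s'⟫ ^ 2 - ρ s * ρ s' * (‖φ s‖ ^ 2 + ‖φ s'‖ ^ 2) := by
    intro s s'
    ring
  simp_rw [hexpand_dist, hexpand_reg, sum_sub_distrib, ← mul_sum]
  rw [hcoupling, hproduct]
  ring

/-- For a joint distribution `ρ₂` on pairs of states whose two marginals
coincide and equal `ρ`, the Laplacian-eigenfunction loss with regularization weight `λ = 1`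
equals the asymmetric low-rank factorization loss:
`∑ ρ₂(s,s') ‖φ(s) − φ(s')‖² + ∑ ρ(s) ρ(s') ((φ(s)·φ(s'))² − ‖φ(s)‖² − ‖φ(s')‖²)
 = −2 ∑ ρ₂(s,s') (φ(s)·φ(s')) + ∑ ρ(s) ρ(s') (φ(s)·φ(s'))²`. -/
theorem stmt10 {S : Type*} [Fintype S] [Nonempty S] {d : ℕ}
    (ρ₂ : S × S → ℝ) (hρ₂0 : ∀ p, 0 ≤ ρ₂ p) (hρ₂1 : ∑ p : S × S, ρ₂ p = 1)
    (ρ : S → ℝ)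
    (hmarg1 : ∀ s, ∑ s', ρ₂ (s, s') = ρ s)
    (hmarg2 : ∀ s, ∑ s', ρ₂ (s', s) = ρ s)
    (φ : S → EuclideanSpace ℝ (Fin d)) :
    (∑ s, ∑ s', ρ₂ (s, s') * ‖φ s - φ s'‖ ^ 2)
      + (∑ s, ∑ s', ρ s * ρ s' * (⟪φ s, φ s'⟫ ^ 2 - ‖φ s‖ ^ 2 - ‖φ s'‖ ^ 2))
    = -2 * (∑ s, ∑ s', ρ₂ (s, s') * ⟪φ s, φ s'⟫)
      + ∑ s, ∑ s', ρ s * ρ s' * ⟪φ s, φ s'⟫ ^ 2 :=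
  stmt10_general ρ₂ hρ₂1 ρ hmarg1 hmarg2 φ
end

section
/- Let S be a nonempty finite type, let Q : Matrix S S ℝ be row-stochastic (all entries nonnegative and each row sums to 1), and let γ be a real number with 0 ≤ γ < 1. Then the normalized successor matrix M̃ := (1 − γ) • ∑_{t≥0} γ^t • Q^{t+1} is well defined (the series converges entrywise absolutely), equals (1 − γ) • (Q * (1 − γ • Q)⁻¹), and is itself row-stochastic: all its entries are nonnegative and each of its rows sums to 1. -/
open Matrix

/-!
Powers of a stochastic matrix are stochastic, so the entries of `γ ^ t • Q ^ (t + 1)` and of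
`(γ • Q) ^ t` are bounded by `γ ^ t` and both series converge. The second one is the Neumann
series of `1 - γ • Q`, which gives the closed form, and `M` is the convex combination of the
stochastic matrices `Q ^ (t + 1)` with geometric weights `(1 - γ) γ ^ t`, hence stochastic.
-/

namespace Matrix

theorem inv_one_sub_eq_tsum_pow {n R : Type*} [Fintype n] [DecidableEq n] [CommRing R]
    [TopologicalSpace R] [IsTopologicalRing R] [T2Space R] {A : Matrix n n R}
    (hA : Summable (A ^ ·)) : (1 - A)⁻¹ = ∑' t : ℕ, A ^ t :=
  inv_eq_right_inv hA.one_sub_mul_tsum_pow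

variable {n ι : Type*} [Fintype n] [DecidableEq n] {P : ι → Matrix n n ℝ} {w : ι → ℝ}

theorem summable_abs_smul_apply_of_mem_rowStochastic (hP : ∀ t, P t ∈ rowStochastic ℝ n)
    (hw0 : ∀ t, 0 ≤ w t) (hw : Summable w) (i j : n) :
    Summable fun t => |(w t • P t) i j| := by
  refine hw.of_nonneg_of_le (fun t => abs_nonneg _) fun t => ?_
  rw [smul_apply, smul_eq_mul, abs_mul, abs_of_nonneg (hw0 t),
    abs_of_nonneg (nonneg_of_mem_rowStochastic (hP t))]
  exact mul_le_of_le_one_right (hw0 t) (le_one_of_mem_rowStochastic (hP t))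

theorem summable_smul_of_mem_rowStochastic (hP : ∀ t, P t ∈ rowStochastic ℝ n)
    (hw0 : ∀ t, 0 ≤ w t) (hw : Summable w) : Summable fun t => w t • P t :=
  Pi.summable.2 fun i => Pi.summable.2 fun j =>
    (summable_abs_smul_apply_of_mem_rowStochastic hP hw0 hw i j).of_abs

theorem tsum_smul_mem_rowStochastic (hP : ∀ t, P t ∈ rowStochastic ℝ n)
    (hw0 : ∀ t, 0 ≤ w t) (hw : HasSum w 1) : ∑' t, w t • P t ∈ rowStochastic ℝ n := by
  have hA := (summable_smul_of_mem_rowStochastic hP hw0 hw.summable).hasSum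
  have hentry (i j : n) : HasSum (fun t => w t * P t i j) ((∑' t, w t • P t) i j) :=
    Pi.hasSum.1 (Pi.hasSum.1 hA i) j
  refine mem_rowStochastic_iff_sum.2 ⟨fun i j => ?_, fun i => ?_⟩
  · exact (hentry i j).nonneg fun t => mul_nonneg (hw0 t) (nonneg_of_mem_rowStochastic (hP t))
  · refine (hasSum_sum fun j _ => hentry i j).unique ?_
    simpa only [← Finset.mul_sum, sum_row_of_mem_rowStochastic (hP _), mul_one] using hw

end Matrix

theorem stmt13_general {S : Type*} [Fintype S] [DecidableEq S]
    (Q : Matrix S S ℝ) (γ : ℝ)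
    (hQ0 : ∀ i j, 0 ≤ Q i j) (hQ1 : ∀ i, ∑ j, Q i j = 1)
    (hγ0 : 0 ≤ γ) (hγ1 : γ < 1)
    (M : Matrix S S ℝ) (hM : M = (1 - γ) • ∑' t : ℕ, γ ^ t • Q ^ (t + 1)) :
    (∀ i j, Summable fun t : ℕ => |(γ ^ t • Q ^ (t + 1)) i j|) ∧
    M = (1 - γ) • (Q * (1 - γ • Q)⁻¹) ∧
    (∀ i j, 0 ≤ M i j) ∧ (∀ i, ∑ j, M i j = 1) := by
  have hQ : Q ∈ rowStochastic ℝ S := mem_rowStochastic_iff_sum.2 ⟨hQ0, hQ1⟩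
  have hpow (t : ℕ) : Q ^ t ∈ rowStochastic ℝ S := pow_mem hQ t
  have hγt (t : ℕ) : 0 ≤ γ ^ t := pow_nonneg hγ0 t
  have hgeom : HasSum (γ ^ ·) (1 - γ)⁻¹ := hasSum_geometric_of_lt_one hγ0 hγ1
  have hsum := summable_smul_of_mem_rowStochastic hpow hγt hgeom.summable
  have hsucc := summable_smul_of_mem_rowStochastic (fun t => hpow (t + 1)) hγt hgeom.summable
  have hinv : (1 - γ • Q)⁻¹ = ∑' t : ℕ, γ ^ t • Q ^ t := by
    rw [inv_one_sub_eq_tsum_pow (by simpa only [smul_pow] using hsum)]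
    simp_rw [smul_pow]
  have hweights : HasSum (fun t : ℕ => (1 - γ) * γ ^ t) 1 := by
    simpa only [mul_inv_cancel₀ (sub_ne_zero.2 hγ1.ne')] using hgeom.mul_left (1 - γ)
  have hMsum : M = ∑' t : ℕ, ((1 - γ) * γ ^ t) • Q ^ (t + 1) := by
    simp_rw [hM, mul_smul, hsucc.tsum_const_smul]
  have hMstoch : M ∈ rowStochastic ℝ S := hMsum ▸ tsum_smul_mem_rowStochastic
    (fun t => hpow (t + 1)) (fun t => mul_nonneg (sub_nonneg.2 hγ1.le) (hγt t)) hweights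
  refine ⟨summable_abs_smul_apply_of_mem_rowStochastic (fun t => hpow (t + 1)) hγt
    hgeom.summable, ?_, fun i j => nonneg_of_mem_rowStochastic hMstoch,
    sum_row_of_mem_rowStochastic hMstoch⟩
  simp_rw [hM, hinv, ← hsum.tsum_mul_left, mul_smul_comm, ← pow_succ']

/-- For a row-stochastic `Q` and `0 ≤ γ < 1`, the normalized successor
matrix `M̃ = (1 − γ) • ∑_{t ≥ 0} γ^t • Q^{t+1}` is well defined (the series converges
entrywise absolutely), equals `(1 − γ) • (Q * (1 − γ • Q)⁻¹)`, and is itself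
row-stochastic. -/
theorem stmt13 {S : Type*} [Fintype S] [Nonempty S] [DecidableEq S]
    (Q : Matrix S S ℝ) (γ : ℝ)
    (hQ0 : ∀ i j, 0 ≤ Q i j) (hQ1 : ∀ i, ∑ j, Q i j = 1)
    (hγ0 : 0 ≤ γ) (hγ1 : γ < 1)
    (M : Matrix S S ℝ) (hM : M = (1 - γ) • ∑' t : ℕ, γ ^ t • Q ^ (t + 1)) :
    (∀ i j, Summable fun t : ℕ => |(γ ^ t • Q ^ (t + 1)) i j|) ∧
    M = (1 - γ) • (Q * (1 - γ • Q)⁻¹) ∧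
    (∀ i j, 0 ≤ M i j) ∧ (∀ i, ∑ j, M i j = 1) :=
  stmt13_general Q γ hQ0 hQ1 hγ0 hγ1 M hM
end

section
/- Let S and A be nonempty finite types, γ ∈ ℝ, let P : Matrix (S × A) S ℝ be row-stochastic, let π : S → A be a fixed policy, let ν : S × A → ℝ be nonnegative weights and ρ : S → ℝ strictly positive weights, and fix target maps F̄ : S × A → ℝ^d and B̄ : S → ℝ^d. For F : S × A → ℝ^d and B : S → ℝ^d define L(F,B) := ∑_{(s,a)} ν(s,a) * ∑_{s'} ρ(s') * ( F(s,a) ⬝ B(s') − P((s,a),s')/ρ(s') − γ * ∑_{s₁} P((s,a),s₁) * (F̄(s₁, π s₁) ⬝ B̄(s')) )² and L̂(F,B) := ∑_{(s,a)} ν(s,a) * ∑_{s₁} P((s,a),s₁) * ∑_{s'} ρ(s') * ( F(s,a) ⬝ B(s') − γ * (F̄(s₁, π s₁) ⬝ B̄(s')) )² − 2 * ∑_{(s,a)} ν(s,a) * ∑_{s₁} P((s,a),s₁) * (F(s,a) ⬝ B(s₁)). Then the difference L − L̂ does not depend on (F, B): for all F, B, F', B', one has L(F,B) − L̂(F,B)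 = L(F',B') − L̂(F',B'). -/
open Matrix Finset

/-
Fix a state-action pair and write `x s' = F(s,a) ⬝ B(s')`, `p = P((s,a), ·)`, `c = p / ρ` and
`m s'` for the `p`-mean of the targets `F̄(s₁, π s₁) ⬝ B̄(s')`. By the bias-variance
decomposition, averaging the sampled squared error over `s₁ ~ p` gives `∑ ρ (x - γ m)²` plus a
variance term free of `x`. Expanding `(x - c - γ m)² = (x - γ m)² - 2 c (x - γ m) + c²`, the only
part of `L` depending on `x` beyond that common square is `-2 ∑ ρ c x = -2 ∑ p x`, which is
exactly the correction term of `L̂`.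
-/

lemma sum_mul_sub_sq_of_sum_eq_one {ι : Type*} [Fintype ι] {p : ι → ℝ}
    (hp : ∑ i, p i = 1) (x : ℝ) (g : ι → ℝ) :
    ∑ i, p i * (x - g i) ^ 2
      = (x - ∑ i, p i * g i) ^ 2 + (∑ i, p i * g i ^ 2 - (∑ i, p i * g i) ^ 2) := by
  have expand : ∀ i, p i * (x - g i) ^ 2 = x ^ 2 * p i - 2 * x * (p i * g i) + p i * g i ^ 2 :=
    fun i => by ring
  simp only [expand, sum_add_distrib, sum_sub_distrib, ← mul_sum, hp]
  ring

lemma bellman_residual_sub_sampled_loss {S : Type*} [Fintype S] (γ : ℝ) {ρ : S → ℝ}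
    (hρ : ∀ s, ρ s ≠ 0) {p : S → ℝ} (hp : ∑ s, p s = 1) (f : S → S → ℝ) (x : S → ℝ) :
    (∑ s', ρ s' * (x s' - p s' / ρ s' - γ * ∑ s₁, p s₁ * f s₁ s') ^ 2)
      - ((∑ s₁, p s₁ * ∑ s', ρ s' * (x s' - γ * f s₁ s') ^ 2) - 2 * ∑ s₁, p s₁ * x s₁)
    = ∑ s', ρ s' * ((p s' / ρ s' + γ * ∑ s₁, p s₁ * f s₁ s') ^ 2
        - γ ^ 2 * ∑ s₁, p s₁ * f s₁ s' ^ 2) := by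
  have average : ∑ s₁, p s₁ * ∑ s', ρ s' * (x s' - γ * f s₁ s') ^ 2
      = ∑ s', ρ s' * ((x s' - ∑ s₁, p s₁ * (γ * f s₁ s')) ^ 2
          + (∑ s₁, p s₁ * (γ * f s₁ s') ^ 2 - (∑ s₁, p s₁ * (γ * f s₁ s')) ^ 2)) := by
    calc ∑ s₁, p s₁ * ∑ s', ρ s' * (x s' - γ * f s₁ s') ^ 2
        = ∑ s', ρ s' * ∑ s₁, p s₁ * (x s' - γ * f s₁ s') ^ 2 := by
          simp_rw [mul_sum]
          rw [sum_comm]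
          simp_rw [mul_left_comm]
      _ = _ := sum_congr rfl fun s' _ => by rw [sum_mul_sub_sq_of_sum_eq_one hp]
  have correction : ∑ s₁, p s₁ * x s₁ = ∑ s', ρ s' * (p s' / ρ s' * x s') :=
    sum_congr rfl fun s _ => by field_simp [hρ s]
  rw [average, correction, mul_sum, ← sum_sub_distrib, ← sum_sub_distrib]
  refine sum_congr rfl fun s' _ => ?_
  simp_rw [mul_pow, mul_left_comm (p _), ← mul_sum]
  field_simp [hρ s']
  ring

theorem stmt16_general {S A : Type*} [Fintype S] [Fintype A]
    {d : ℕ} (γ : ℝ) (P : Matrix (S × A) S ℝ)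
    (hP1 : ∀ sa, ∑ s', P sa s' = 1)
    (π : S → A)
    (ν : S × A → ℝ)
    (ρ : S → ℝ) (hρ : ∀ s, 0 < ρ s)
    (Fbar : S × A → Fin d → ℝ) (Bbar : S → Fin d → ℝ)
    (L Lhat : (S × A → Fin d → ℝ) → (S → Fin d → ℝ) → ℝ)
    (hL : ∀ F B, L F B = ∑ sa, ν sa * ∑ s', ρ s' *
      (F sa ⬝ᵥ B s' - P sa s' / ρ s'
        - γ * ∑ s₁, P sa s₁ * (Fbar (s₁, π s₁) ⬝ᵥ Bbar s')) ^ 2)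
    (hLhat : ∀ F B, Lhat F B =
      (∑ sa, ν sa * ∑ s₁, P sa s₁ * ∑ s', ρ s' *
        (F sa ⬝ᵥ B s' - γ * (Fbar (s₁, π s₁) ⬝ᵥ Bbar s')) ^ 2)
      - 2 * ∑ sa, ν sa * ∑ s₁, P sa s₁ * (F sa ⬝ᵥ B s₁)) :
    ∀ (F : S × A → Fin d → ℝ) (B : S → Fin d → ℝ)
      (F' : S × A → Fin d → ℝ) (B' : S → Fin d → ℝ),
      L F B - Lhat F B = L F' B' - Lhat F' B' := by
  have gap : ∀ F B, L F B - Lhat F B = ∑ sa, ν sa * ∑ s', ρ s' *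
      ((P sa s' / ρ s' + γ * ∑ s₁, P sa s₁ * (Fbar (s₁, π s₁) ⬝ᵥ Bbar s')) ^ 2
        - γ ^ 2 * ∑ s₁, P sa s₁ * (Fbar (s₁, π s₁) ⬝ᵥ Bbar s') ^ 2) := by
    intro F B
    rw [hL, hLhat, mul_sum, ← sum_sub_distrib, ← sum_sub_distrib]
    refine sum_congr rfl fun sa _ => ?_
    rw [← bellman_residual_sub_sampled_loss γ (fun s => (hρ s).ne') (hP1 sa)]
    ring
  intro F B F' B'
  rw [gap F B, gap F' B']

/-- With a row-stochastic transition matrix `P`, dataset weights `ν ≥ 0`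
on state-actions and `ρ > 0` on states, a fixed policy `π` and fixed target networks
`F̄, B̄`, the ρ-weighted squared Bellman residual loss `L` of the finite-rank model
`M = Fᵀ B ρ` and the sampled forward-backward training loss `L̂` differ by a quantity that
does not depend on the trainable parameters `(F, B)`. -/
theorem stmt16 {S A : Type*} [Fintype S] [Fintype A] [Nonempty S] [Nonempty A]
    {d : ℕ} (γ : ℝ) (P : Matrix (S × A) S ℝ)
    (hP0 : ∀ sa s', 0 ≤ P sa s') (hP1 : ∀ sa, ∑ s', P sa s' = 1)
    (π : S → A)
    (ν : S × A → ℝ) (hν : ∀ sa, 0 ≤ ν sa)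
    (ρ : S → ℝ) (hρ : ∀ s, 0 < ρ s)
    (Fbar : S × A → Fin d → ℝ) (Bbar : S → Fin d → ℝ)
    (L Lhat : (S × A → Fin d → ℝ) → (S → Fin d → ℝ) → ℝ)
    (hL : ∀ F B, L F B = ∑ sa, ν sa * ∑ s', ρ s' *
      (F sa ⬝ᵥ B s' - P sa s' / ρ s'
        - γ * ∑ s₁, P sa s₁ * (Fbar (s₁, π s₁) ⬝ᵥ Bbar s')) ^ 2)
    (hLhat : ∀ F B, Lhat F B =
      (∑ sa, ν sa * ∑ s₁, P sa s₁ * ∑ s', ρ s' *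
        (F sa ⬝ᵥ B s' - γ * (Fbar (s₁, π s₁) ⬝ᵥ Bbar s')) ^ 2)
      - 2 * ∑ sa, ν sa * ∑ s₁, P sa s₁ * (F sa ⬝ᵥ B s₁)) :
    ∀ (F : S × A → Fin d → ℝ) (B : S → Fin d → ℝ)
      (F' : S × A → Fin d → ℝ) (B' : S → Fin d → ℝ),
      L F B - Lhat F B = L F' B' - Lhat F' B' :=
  stmt16_general γ P hP1 π ν ρ hρ Fbar Bbar L Lhat hL hLhat
end
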